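/- Let (P, m, A) be a poset system and suppose a, b ∈ A are distinct elements with ub(a) ⊇ ub(b) and lb(a) ⊆ lb(b), where ub(x) = {y : x ≺ y} and lb(x) = {y : y ≺ x}. Then for every prime power q, k(P, m, A; q) = k(P, m, A \ {b}; q). -/

import Mathlib

/-
Common framework: pattern posets, pattern algebras and pattern groups
(in the sense of Isaacs), the spaces `L_P(q)` realizing the dual of the pattern
algebra, the co-adjoint action, poset systems `(P, m, A)` and their orbit counts
`k(P, m, A; q)`, and combinatorial operations on pattern posets, following
"On Higman's conjecture" by Pak and Soffer.
-/

open Matrix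

/-- A pattern poset on `{0,…,n-1}`: a strict partial order on `Fin n` that has the
standard order of the integers as a linear extension. -/
structure PatternPoset (n : ℕ) where
  lt : Fin n → Fin n → Prop
  lt_trans : ∀ {i j k : Fin n}, lt i j → lt j k → lt i k
  lt_le : ∀ {i j : Fin n}, lt i j → (i : ℕ) < (j : ℕ)

namespace PatternPoset

variable {n : ℕ}

theorem lt_irrefl (P : PatternPoset n) (i : Fin n) : ¬ P.lt i i :=
  fun h => Nat.lt_irrefl _ (P.lt_le h)

theorem ne_of_lt (P : PatternPoset n) {i j : Fin n} (h : P.lt i j) : i ≠ j := by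
  intro e; subst e; exact P.lt_irrefl i h

/-- The pattern algebra `𝒰_P(q)`, as a subspace of the `n × n` matrices:
matrices supported on the cells `(i,j)` with `i ≺ j`. -/
def patternAlg (P : PatternPoset n) (F : Type*) [Field F] :
    Submodule F (Matrix (Fin n) (Fin n) F) where
  carrier := {X | ∀ i j : Fin n, ¬ P.lt i j → X i j = 0}
  add_mem' := by
    intro a b ha hb i j h
    simp [Matrix.add_apply, ha i j h, hb i j h]
  zero_mem' := by intro i j h; simp
  smul_mem' := by
    intro c a ha i j h
    simp [Matrix.smul_apply, ha i j h]

theorem mul_mem_patternAlg {P : PatternPoset n} {F : Type*} [Field F]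
    {X Y : Matrix (Fin n) (Fin n) F} (hX : X ∈ P.patternAlg F) (hY : Y ∈ P.patternAlg F) :
    X * Y ∈ P.patternAlg F := by
  intro i j h
  rw [Matrix.mul_apply]
  apply Finset.sum_eq_zero
  intro k _
  by_cases h1 : P.lt i k
  · by_cases h2 : P.lt k j
    · exact absurd (P.lt_trans h1 h2) h
    · rw [hY k j h2, mul_zero]
  · rw [hX i k h1, zero_mul]

theorem pow_apply_ne_zero {P : PatternPoset n} {F : Type*} [Field F]
    {X : Matrix (Fin n) (Fin n) F} (hX : X ∈ P.patternAlg F) :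
    ∀ t (i j : Fin n), (X ^ t) i j ≠ 0 → (i : ℕ) + t ≤ (j : ℕ) := by
  intro t
  induction t with
  | zero =>
    intro i j h
    rw [pow_zero] at h
    by_cases hij : i = j
    · subst hij; simp
    · exact absurd (Matrix.one_apply_ne hij) h
  | succ t ih =>
    intro i j h
    rw [pow_succ, Matrix.mul_apply] at h
    obtain ⟨k, -, hk⟩ := Finset.exists_ne_zero_of_sum_ne_zero h
    have h1 : (X ^ t) i k ≠ 0 := fun e => hk (by rw [e, zero_mul])
    have h2 : X k j ≠ 0 := fun e => hk (by rw [e, mul_zero])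
    have h3 : P.lt k j := by by_contra hc; exact h2 (hX k j hc)
    have h4 := ih i k h1
    have h5 := P.lt_le h3
    omega

theorem pow_card_eq_zero {P : PatternPoset n} {F : Type*} [Field F]
    {X : Matrix (Fin n) (Fin n) F} (hX : X ∈ P.patternAlg F) : X ^ n = 0 := by
  ext i j
  simp only [Matrix.zero_apply]
  by_contra h
  have h1 := pow_apply_ne_zero hX n i j h
  have h2 := j.isLt
  omega

theorem pow_succ_mem_patternAlg {P : PatternPoset n} {F : Type*} [Field F]
    {X : Matrix (Fin n) (Fin n) F} (hX : X ∈ P.patternAlg F) (t : ℕ) :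
    X ^ (t + 1) ∈ P.patternAlg F := by
  induction t with
  | zero => simpa using hX
  | succ t ih => rw [pow_succ]; exact mul_mem_patternAlg ih hX

theorem inv_sub_one_mem {P : PatternPoset n} {F : Type*} [Field F]
    {a : (Matrix (Fin n) (Fin n) F)ˣ}
    (ha : ((a : Matrix (Fin n) (Fin n) F) - 1) ∈ P.patternAlg F) :
    (((a⁻¹ : (Matrix (Fin n) (Fin n) F)ˣ) : Matrix (Fin n) (Fin n) F) - 1)
      ∈ P.patternAlg F := by
  rcases Nat.eq_zero_or_pos n with hn | hn
  · subst hn; intro i j _; exact i.elim0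
  obtain ⟨m, rfl⟩ : ∃ m, n = m + 1 := ⟨n - 1, by omega⟩
  set X : Matrix (Fin (m + 1)) (Fin (m + 1)) F :=
    (a : Matrix (Fin (m + 1)) (Fin (m + 1)) F) - 1 with hXdef
  have hXmem : -X ∈ P.patternAlg F := (P.patternAlg F).neg_mem ha
  have hXn : (-X) ^ (m + 1) = 0 := pow_card_eq_zero hXmem
  have key : (∑ t ∈ Finset.range (m + 1), (-X) ^ t) *
      (a : Matrix (Fin (m + 1)) (Fin (m + 1)) F) = 1 := by
    have hgeom := geom_sum_mul (-X) (m + 1)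
    rw [hXn] at hgeom
    have ha' : (a : Matrix (Fin (m + 1)) (Fin (m + 1)) F) = -((-X) - 1) := by
      rw [hXdef]; abel
    rw [ha', mul_neg, hgeom]
    simp
  have hinv : ((a⁻¹ : (Matrix (Fin (m + 1)) (Fin (m + 1)) F)ˣ) :
        Matrix (Fin (m + 1)) (Fin (m + 1)) F)
      = ∑ t ∈ Finset.range (m + 1), (-X) ^ t :=
    Units.inv_eq_of_mul_eq_one_left key
  rw [hinv]
  have hsplit : (∑ t ∈ Finset.range (m + 1), (-X) ^ t) - 1
      = ∑ t ∈ Finset.range m, (-X) ^ (t + 1) := by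
    rw [Finset.sum_range_succ' (fun t => (-X) ^ t) m]
    simp
  rw [hsplit]
  exact Submodule.sum_mem _ (fun t _ => pow_succ_mem_patternAlg hXmem t)

theorem entry_cases {P : PatternPoset n} {F : Type*} [Field F]
    {M : Matrix (Fin n) (Fin n) F} (hM : (M - 1) ∈ P.patternAlg F)
    {i k : Fin n} (h : M i k ≠ 0) : i = k ∨ P.lt i k := by
  by_contra hc
  push_neg at hc
  apply h
  have h1 := hM i k hc.2
  have h2 : (1 : Matrix (Fin n) (Fin n) F) i k = 0 := Matrix.one_apply_ne hc.1
  calc M i k = (M - 1) i k + (1 : Matrix (Fin n) (Fin n) F) i k := by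
        simp [Matrix.sub_apply]
    _ = 0 := by rw [h1, h2, add_zero]

theorem conj_entry_zero {P : PatternPoset n} {F : Type*} [Field F]
    {A B Y : Matrix (Fin n) (Fin n) F}
    (hA : (A - 1) ∈ P.patternAlg F) (hB : (B - 1) ∈ P.patternAlg F)
    (i j : Fin n)
    (hzero : ∀ k l : Fin n, (i = k ∨ P.lt i k) → (l = j ∨ P.lt l j) → Y k l = 0) :
    (A * Y * B) i j = 0 := by
  rw [Matrix.mul_apply]
  apply Finset.sum_eq_zero
  intro l _
  rw [Matrix.mul_apply, Finset.sum_mul]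
  apply Finset.sum_eq_zero
  intro k _
  by_cases hAik : A i k = 0
  · rw [hAik, zero_mul, zero_mul]
  by_cases hBlj : B l j = 0
  · rw [hBlj, mul_zero]
  rw [hzero k l (entry_cases hA hAik) (entry_cases hB hBlj), mul_zero, zero_mul]

/-- The pattern group `U_P(q) = {1 + X : X ∈ 𝒰_P(q)}`, as a subgroup of the units of the
matrix ring. -/
def patternGroup (P : PatternPoset n) (F : Type*) [Field F] :
    Subgroup (Matrix (Fin n) (Fin n) F)ˣ where
  carrier := {g | ((g : Matrix (Fin n) (Fin n) F) - 1) ∈ P.patternAlg F}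
  one_mem' := by
    simp only [Set.mem_setOf_eq, Units.val_one, sub_self]
    exact (P.patternAlg F).zero_mem
  mul_mem' := by
    intro a b ha hb
    simp only [Set.mem_setOf_eq, Units.val_mul] at *
    have h : (a : Matrix (Fin n) (Fin n) F) * b - 1 =
        ((a : Matrix (Fin n) (Fin n) F) - 1) * ((b : Matrix (Fin n) (Fin n) F) - 1)
          + (((a : Matrix (Fin n) (Fin n) F) - 1) + ((b : Matrix (Fin n) (Fin n) F) - 1)) := by
      noncomm_ring
    rw [h]
    exact (P.patternAlg F).add_mem (mul_mem_patternAlg ha hb) ((P.patternAlg F).add_mem ha hb)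
  inv_mem' := fun ha => inv_sub_one_mem ha

/-- `k(P; q)`: the number of conjugacy classes of the pattern group `U_P(q)`. -/
noncomputable def kOf (P : PatternPoset n) (F : Type*) [Field F] : ℕ :=
  Nat.card (ConjClasses (P.patternGroup F))

/-- The chain poset `C_n`, whose pattern group is the full unitriangular group `U_n(q)`. -/
def chainPoset (n : ℕ) : PatternPoset n where
  lt i j := (i : ℕ) < (j : ℕ)
  lt_trans := fun h1 h2 => Nat.lt_trans h1 h2
  lt_le := fun h => h

/-- The induced subposet `P − m`, obtained by deleting the element `m`. -/
def delete (P : PatternPoset (n + 1)) (m : Fin (n + 1)) : PatternPoset n where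
  lt i j := P.lt (m.succAbove i) (m.succAbove j)
  lt_trans := fun h1 h2 => P.lt_trans h1 h2
  lt_le := fun {i j} h => by
    have h2 : m.succAbove i < m.succAbove j := by
      rw [Fin.lt_def]; exact P.lt_le h
    exact Fin.lt_def.mp (Fin.succAbove_lt_succAbove_iff.mp h2)

/-- The dual poset `P*`, relabeled by `i ↦ n + 1 − i` so that the standard order is
again a linear extension. -/
def dual (P : PatternPoset n) : PatternPoset n where
  lt i j := P.lt j.rev i.rev
  lt_trans := fun h1 h2 => P.lt_trans h2 h1
  lt_le := fun {i j} h => by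
    have h1 : j.rev < i.rev := by rw [Fin.lt_def]; exact P.lt_le h
    exact Fin.lt_def.mp (Fin.rev_lt_rev.mp h1)

/-- The disjoint union `P ⨿ Q` of two pattern posets. -/
def disjUnion {m n : ℕ} (P : PatternPoset m) (Q : PatternPoset n) :
    PatternPoset (m + n) where
  lt x y :=
    match finSumFinEquiv.symm x, finSumFinEquiv.symm y with
    | Sum.inl a, Sum.inl b => P.lt a b
    | Sum.inr a, Sum.inr b => Q.lt a b
    | _, _ => False
  lt_trans := by
    intro i j k hij hjk
    rcases hi : finSumFinEquiv.symm i with a | a <;>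
      rcases hj : finSumFinEquiv.symm j with b | b <;>
        rcases hk : finSumFinEquiv.symm k with c | c <;>
          simp only [hi, hj, hk] at hij hjk ⊢ <;>
            first
              | exact P.lt_trans hij hjk
              | exact Q.lt_trans hij hjk
  lt_le := by
    intro i j h
    rcases hi : finSumFinEquiv.symm i with a | a <;>
      rcases hj : finSumFinEquiv.symm j with b | b <;>
        simp only [hi, hj] at h
    · have hi' : i = Fin.castAdd _ a := by
        rw [← finSumFinEquiv_apply_left, ← hi, Equiv.apply_symm_apply]
      have hj' : j = Fin.castAdd _ b := by
        rw [← finSumFinEquiv_apply_left, ← hj, Equiv.apply_symm_apply]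
      rw [hi', hj']
      exact P.lt_le h
    · have hi' : i = Fin.natAdd _ a := by
        rw [← finSumFinEquiv_apply_right, ← hi, Equiv.apply_symm_apply]
      have hj' : j = Fin.natAdd _ b := by
        rw [← finSumFinEquiv_apply_right, ← hj, Equiv.apply_symm_apply]
      rw [hi', hj']
      simpa using Q.lt_le h

/-- The subspace of matrices quotiented away in `L_P(q)`:
those vanishing on all cells `(i,j)` with `j ≺ i`. -/
def lowQuot (P : PatternPoset n) (F : Type*) [Field F] :
    Submodule F (Matrix (Fin n) (Fin n) F) where
  carrier := {X | ∀ i j : Fin n, P.lt j i → X i j = 0}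
  add_mem' := by
    intro a b ha hb i j h
    simp [Matrix.add_apply, ha i j h, hb i j h]
  zero_mem' := by intro i j h; simp
  smul_mem' := by
    intro c a ha i j h
    simp [Matrix.smul_apply, ha i j h]

/-- The space `L_P(q)`, realizing the dual `𝒰_P(q)*` as a quotient of the
space of all `n × n` matrices. -/
abbrev LSpace (P : PatternPoset n) (F : Type*) [Field F] :=
  Matrix (Fin n) (Fin n) F ⧸ P.lowQuot F

end PatternPoset

/-- Conjugation `X ↦ g X g⁻¹` by a unit, as a linear map on matrices. -/
def conjLin {n : ℕ} (F : Type*) [Field F] (g : (Matrix (Fin n) (Fin n) F)ˣ) :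
    Matrix (Fin n) (Fin n) F →ₗ[F] Matrix (Fin n) (Fin n) F where
  toFun X := (g : Matrix (Fin n) (Fin n) F) * X *
    ((g⁻¹ : (Matrix (Fin n) (Fin n) F)ˣ) : Matrix (Fin n) (Fin n) F)
  map_add' X Y := by rw [mul_add, add_mul]
  map_smul' c X := by rw [mul_smul_comm, smul_mul_assoc]; rfl

namespace PatternPoset

variable {n : ℕ}

/-- The co-adjoint action `K_g(X) = g X g⁻¹` of the pattern group on `L_P(q)`. -/
noncomputable def coadj (P : PatternPoset n) (F : Type*) [Field F]
    (g : P.patternGroup F) : P.LSpace F →ₗ[F] P.LSpace F :=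
  Submodule.mapQ _ _ (conjLin F (g : (Matrix (Fin n) (Fin n) F)ˣ)) (by
    intro Y hY
    simp only [Submodule.mem_comap]
    have hg : ((g : (Matrix (Fin n) (Fin n) F)ˣ) : Matrix (Fin n) (Fin n) F) - 1
        ∈ P.patternAlg F := g.2
    have hginv : (((g : (Matrix (Fin n) (Fin n) F)ˣ)⁻¹ : (Matrix (Fin n) (Fin n) F)ˣ) :
        Matrix (Fin n) (Fin n) F) - 1 ∈ P.patternAlg F := inv_sub_one_mem g.2
    intro i j hji
    apply conj_entry_zero hg hginv
    intro k l hik hlj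
    apply hY k l
    rcases hik with rfl | hik <;> rcases hlj with rfl | hlj
    · exact hji
    · exact P.lt_trans hlj hji
    · exact P.lt_trans hji hik
    · exact P.lt_trans (P.lt_trans hlj hji) hik)

/-- The poset `P^(m)`: the poset on the same ground set whose only relations
are `x ≺ m` for `x ≺_P m`. -/
def restrictTo (P : PatternPoset n) (m : Fin n) : PatternPoset n where
  lt x y := y = m ∧ P.lt x y
  lt_trans := fun h1 h2 => ⟨h2.1, P.lt_trans h1.2 h2.2⟩
  lt_le := fun h => P.lt_le h.2

/-- The canonical projection `π : L_P(q) → L_{P^(m)}(q)`. -/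
noncomputable def projL (P : PatternPoset n) (m : Fin n) (F : Type*) [Field F] :
    P.LSpace F →ₗ[F] (P.restrictTo m).LSpace F :=
  Submodule.mapQ _ _ LinearMap.id (by
    intro X hX
    simp only [Submodule.mem_comap, LinearMap.id_coe, id_eq]
    intro i j h
    exact hX i j h.2)

end PatternPoset

/-- The elementary transvection `E_{i,j}(α) = 1 + α e_{i,j}` as a unit of the matrix ring. -/
def transvectionUnit {n : ℕ} {F : Type*} [Field F] (i j : Fin n) (hij : i ≠ j) (α : F) :
    (Matrix (Fin n) (Fin n) F)ˣ where
  val := 1 + Matrix.single i j α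
  inv := 1 + Matrix.single i j (-α)
  val_inv := by
    have h0 : Matrix.single i j α * Matrix.single i j (-α) = 0 :=
      Matrix.single_mul_single_of_ne _ _ _ _ hij.symm _
    have h1 : Matrix.single i j α + Matrix.single i j (-α) = 0 := by
      rw [← Matrix.single_add]; simp
    rw [add_mul, mul_add, mul_add, one_mul, mul_one, h0]
    rw [add_zero, add_assoc, one_mul, add_comm (Matrix.single i j (-α)), h1, add_zero]
  inv_val := by
    have h0 : Matrix.single i j (-α) * Matrix.single i j α = 0 :=
      Matrix.single_mul_single_of_ne _ _ _ _ hij.symm _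
    have h1 : Matrix.single i j (-α) + Matrix.single i j α = 0 := by
      rw [← Matrix.single_add]; simp
    rw [add_mul, mul_add, mul_add, one_mul, mul_one, h0]
    rw [add_zero, add_assoc, one_mul, add_comm (Matrix.single i j α), h1, add_zero]

/-- A poset system `(P, m, A)`: a pattern poset `P`, a maximal element `m`,
and an anti-chain `A ⊆ lb(m)`. -/
structure PosetSystem (n : ℕ) where
  P : PatternPoset n
  m : Fin n
  m_max : ∀ x, ¬ P.lt m x
  A : Finset (Fin n)
  A_lb : ∀ a ∈ A, P.lt a m
  A_anti : ∀ a ∈ A, ∀ b ∈ A, ¬ P.lt a b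

namespace PosetSystem

variable {n : ℕ}

/-- The element `1_A = Σ_{a ∈ A} e_{m,a}` of `L_{P^(m)}(q)`. -/
noncomputable def oneA (S : PosetSystem n) (F : Type*) [Field F] :
    (S.P.restrictTo S.m).LSpace F :=
  Submodule.Quotient.mk (∑ a ∈ S.A, Matrix.single S.m a (1 : F))

/-- The action of `U_P(q)` on `L_{P^(m)}(q)` induced by the co-adjoint action. -/
noncomputable def coadjQ (S : PosetSystem n) (F : Type*) [Field F]
    (g : S.P.patternGroup F) :
    (S.P.restrictTo S.m).LSpace F →ₗ[F] (S.P.restrictTo S.m).LSpace F :=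
  Submodule.mapQ _ _ (conjLin F (g : (Matrix (Fin n) (Fin n) F)ˣ)) (by
    intro Y hY
    simp only [Submodule.mem_comap]
    have hg : ((g : (Matrix (Fin n) (Fin n) F)ˣ) : Matrix (Fin n) (Fin n) F) - 1
        ∈ S.P.patternAlg F := g.2
    have hginv : (((g : (Matrix (Fin n) (Fin n) F)ˣ)⁻¹ : (Matrix (Fin n) (Fin n) F)ˣ) :
        Matrix (Fin n) (Fin n) F) - 1 ∈ S.P.patternAlg F :=
      PatternPoset.inv_sub_one_mem g.2
    intro i j hji
    obtain ⟨him, hjilt⟩ := hji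
    apply PatternPoset.conj_entry_zero hg hginv
    intro k l hik hlj
    have hk : k = S.m := by
      rcases hik with rfl | hik
      · exact him
      · rw [him] at hik; exact absurd hik (S.m_max k)
    have hlm : S.P.lt l S.m := by
      rcases hlj with rfl | hlj
      · rw [← him]; exact hjilt
      · rw [him] at hjilt; exact S.P.lt_trans hlj hjilt
    subst hk
    exact hY S.m l ⟨rfl, hlm⟩)

/-- The stabilizer of `1_A` in `U_P(q)` for the induced action on `L_{P^(m)}(q)`. -/
noncomputable def stab (S : PosetSystem n) (F : Type*) [Field F] :
    Set (S.P.patternGroup F) :=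
  {g | S.coadjQ F g (S.oneA F) = S.oneA F}

/-- The fiber `π⁻¹(1_A) ⊆ L_P(q)`. -/
noncomputable def fiber (S : PosetSystem n) (F : Type*) [Field F] :
    Set (S.P.LSpace F) :=
  {X | S.P.projL S.m F X = S.oneA F}

/-- `k(P, m, A; q)`: the number of orbits of `Stab_{U_P(q)}(1_A)` acting on the fiber
`π⁻¹(1_A)` under the co-adjoint action, counted as the number of distinct orbit sets. -/
noncomputable def systemK (S : PosetSystem n) (F : Type*) [Field F] : ℕ :=
  Nat.card {O : Set (S.P.LSpace F) // ∃ X ∈ S.fiber F,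
    O = {Y | ∃ g ∈ S.stab F, S.P.coadj F g X = Y}}

/-- The poset `D(S)`: delete from `P` every relation `(a, x)` with `a ∈ A`,
`a ≺ x ≺ m`, and `A ∩ lb(x) = {a}`. -/
def D (S : PosetSystem n) : PatternPoset n where
  lt x y := S.P.lt x y ∧
    ¬ (x ∈ S.A ∧ S.P.lt y S.m ∧ ∀ b ∈ S.A, S.P.lt b y → b = x)
  lt_trans := by
    rintro i j k ⟨hij, hi⟩ ⟨hjk, -⟩
    refine ⟨S.P.lt_trans hij hjk, ?_⟩
    rintro ⟨hiA, hkm, huniq⟩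
    exact hi ⟨hiA, S.P.lt_trans hjk hkm, fun b hb hbj => huniq b hb (S.P.lt_trans hbj hjk)⟩
  lt_le := fun h => S.P.lt_le h.1

/-- `D(S)` together with the same `m` and `A`, as a poset system. -/
def DSys (S : PosetSystem n) : PosetSystem n where
  P := S.D
  m := S.m
  m_max := fun x h => S.m_max x h.1
  A := S.A
  A_lb := fun a ha => ⟨S.A_lb a ha, fun h => S.P.lt_irrefl S.m h.2.1⟩
  A_anti := fun a ha b hb h => S.A_anti a ha b hb h.1

end PosetSystem

/-!
Conjugation by the transvection `g₀ = 1 + e_{a,b}` subtracts column `a` from column `b`, so it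
sends `1_A` to `1_{A \ {b}}`. Although `g₀` need not lie in `U_P(q)`, the hypotheses
`ub(b) ⊆ ub(a)` and `lb(a) ⊆ lb(b)` make conjugation by `g₀` preserve the pattern algebra and the
subspaces cut out in `L_P(q)` and `L_{P^(m)}(q)`. Hence it normalizes `U_P(q)`, commutes with
`π`, carries `Stab(1_A)` onto `Stab(1_{A \ {b}})`, and maps the orbits on `π⁻¹(1_A)` bijectively
onto those on `π⁻¹(1_{A \ {b}})`.
-/

section OrbitSets

variable {G G' X X' : Type*} {act : G → X → X} {act' : G' → X' → X'}
  {H : Set G} {H' : Set G'} {Y : Set X} {Y' : Set X'}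

theorem image_orbit_of_equivariant (σ : G ≃ G') (Φ : X ≃ X')
    (hact : ∀ g x, act' (σ g) (Φ x) = Φ (act g x)) (hH : ∀ g, σ g ∈ H' ↔ g ∈ H) (x : X) :
    Φ '' {y | ∃ g ∈ H, act g x = y} = {y | ∃ g ∈ H', act' g (Φ x) = y} := by
  ext y
  constructor
  · rintro ⟨_, ⟨g, hg, rfl⟩, rfl⟩
    exact ⟨σ g, (hH g).2 hg, hact g x⟩
  · rintro ⟨g, hg, rfl⟩
    refine ⟨act (σ.symm g) x, ⟨σ.symm g, (hH _).1 (by simpa using hg), rfl⟩, ?_⟩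
    rw [← hact, σ.apply_symm_apply]

theorem card_orbitSets_congr (σ : G ≃ G') (Φ : X ≃ X')
    (hact : ∀ g x, act' (σ g) (Φ x) = Φ (act g x)) (hH : ∀ g, σ g ∈ H' ↔ g ∈ H)
    (hY : ∀ x, Φ x ∈ Y' ↔ x ∈ Y) :
    Nat.card {O : Set X // ∃ x ∈ Y, O = {y | ∃ g ∈ H, act g x = y}} =
      Nat.card {O : Set X' // ∃ x ∈ Y', O = {y | ∃ g ∈ H', act' g x = y}} := by
  refine Nat.card_congr (Equiv.subtypeEquiv (Equiv.Set.congr Φ) fun O => ?_)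
  have horbit : ∀ x, Φ '' O = {y | ∃ g ∈ H', act' g (Φ x) = y} ↔
      O = {y | ∃ g ∈ H, act g x = y} := fun x => by
    rw [← image_orbit_of_equivariant σ Φ hact hH, (Set.image_injective.2 Φ.injective).eq_iff]
  rw [Equiv.Set.congr_apply]
  constructor
  · rintro ⟨x, hx, hO⟩
    exact ⟨Φ x, (hY x).2 hx, (horbit x).2 hO⟩
  · rintro ⟨x', hx', hO⟩
    rw [← Φ.apply_symm_apply x'] at hx' hO
    exact ⟨Φ.symm x', (hY _).1 hx', (horbit _).1 hO⟩

end OrbitSets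

section Conjugation

variable {n : ℕ} {F : Type*} [Field F]

theorem conjLin_apply (g : (Matrix (Fin n) (Fin n) F)ˣ) (X : Matrix (Fin n) (Fin n) F) :
    conjLin F g X = (g : Matrix (Fin n) (Fin n) F) * X *
      ((g⁻¹ : (Matrix (Fin n) (Fin n) F)ˣ) : Matrix (Fin n) (Fin n) F) := rfl

theorem conjLin_conjLin (g h : (Matrix (Fin n) (Fin n) F)ˣ) (X : Matrix (Fin n) (Fin n) F) :
    conjLin F g (conjLin F h X) = conjLin F (g * h) X := by
  simp only [conjLin_apply, Units.val_mul, _root_.mul_inv_rev, Matrix.mul_assoc]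

theorem conjLin_inv_conjLin (g : (Matrix (Fin n) (Fin n) F)ˣ) (X : Matrix (Fin n) (Fin n) F) :
    conjLin F g⁻¹ (conjLin F g X) = X := by
  rw [conjLin_conjLin, inv_mul_cancel, conjLin_apply]
  simp

theorem conjLin_conjLin_inv (g : (Matrix (Fin n) (Fin n) F)ˣ) (X : Matrix (Fin n) (Fin n) F) :
    conjLin F g (conjLin F g⁻¹ X) = X := by
  simpa using conjLin_inv_conjLin g⁻¹ X

def conjLinEquiv (g : (Matrix (Fin n) (Fin n) F)ˣ) :
    Matrix (Fin n) (Fin n) F ≃ₗ[F] Matrix (Fin n) (Fin n) F :=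
  { conjLin F g with
    invFun := conjLin F g⁻¹
    left_inv := conjLin_inv_conjLin g
    right_inv := conjLin_conjLin_inv g }

theorem conjLin_mem_iff_of_forall_mem {p : Submodule F (Matrix (Fin n) (Fin n) F)}
    {g : (Matrix (Fin n) (Fin n) F)ˣ} (h : ∀ X ∈ p, conjLin F g X ∈ p)
    (h' : ∀ X ∈ p, conjLin F g⁻¹ X ∈ p) (X : Matrix (Fin n) (Fin n) F) :
    conjLin F g X ∈ p ↔ X ∈ p :=
  ⟨fun hX => conjLin_inv_conjLin g X ▸ h' _ hX, h X⟩

theorem map_conjLinEquiv_eq {p : Submodule F (Matrix (Fin n) (Fin n) F)}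
    {g : (Matrix (Fin n) (Fin n) F)ˣ} (hp : ∀ X, conjLin F g X ∈ p ↔ X ∈ p) :
    p.map (conjLinEquiv g : Matrix (Fin n) (Fin n) F →ₗ[F] Matrix (Fin n) (Fin n) F) = p := by
  ext X
  rw [Submodule.mem_map_equiv, ← hp]
  exact iff_of_eq (congrArg (· ∈ p) (conjLin_conjLin_inv g X))

noncomputable def quotConj (p : Submodule F (Matrix (Fin n) (Fin n) F))
    (g : (Matrix (Fin n) (Fin n) F)ˣ) (hp : ∀ X, conjLin F g X ∈ p ↔ X ∈ p) :
    (Matrix (Fin n) (Fin n) F ⧸ p) ≃ₗ[F] Matrix (Fin n) (Fin n) F ⧸ p :=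
  Submodule.Quotient.equiv p p (conjLinEquiv g) (map_conjLinEquiv_eq hp)

@[simp]
theorem quotConj_mk (p : Submodule F (Matrix (Fin n) (Fin n) F))
    (g : (Matrix (Fin n) (Fin n) F)ˣ) (hp : ∀ X, conjLin F g X ∈ p ↔ X ∈ p)
    (X : Matrix (Fin n) (Fin n) F) :
    quotConj p g hp (Submodule.Quotient.mk X) = Submodule.Quotient.mk (conjLin F g X) :=
  rfl

end Conjugation

namespace PatternPoset

variable {n : ℕ} {F : Type*} [Field F]

def conjPatternGroup (P : PatternPoset n) (g₀ : (Matrix (Fin n) (Fin n) F)ˣ)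
    (hU : ∀ X, conjLin F g₀ X ∈ P.patternAlg F ↔ X ∈ P.patternAlg F) :
    P.patternGroup F ≃ P.patternGroup F :=
  Equiv.subtypeEquiv (MulAut.conj g₀).toEquiv fun g => by
    change _ - 1 ∈ P.patternAlg F ↔ _ - 1 ∈ P.patternAlg F
    rw [← hU, conjLin_apply, MulEquiv.toEquiv_eq_coe, MulEquiv.coe_toEquiv, MulAut.conj_apply,
      Units.val_mul, Units.val_mul, mul_sub, sub_mul, mul_one, Units.mul_inv]

@[simp]
theorem coe_conjPatternGroup_apply (P : PatternPoset n) (g₀ : (Matrix (Fin n) (Fin n) F)ˣ)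
    (hU : ∀ X, conjLin F g₀ X ∈ P.patternAlg F ↔ X ∈ P.patternAlg F) (g : P.patternGroup F) :
    ((P.conjPatternGroup g₀ hU g : P.patternGroup F) : (Matrix (Fin n) (Fin n) F)ˣ) =
      g₀ * g * g₀⁻¹ :=
  rfl

theorem coadj_conjPatternGroup (P : PatternPoset n) (g₀ : (Matrix (Fin n) (Fin n) F)ˣ)
    (hU : ∀ X, conjLin F g₀ X ∈ P.patternAlg F ↔ X ∈ P.patternAlg F)
    (hL : ∀ X, conjLin F g₀ X ∈ P.lowQuot F ↔ X ∈ P.lowQuot F)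
    (g : P.patternGroup F) (X : P.LSpace F) :
    P.coadj F (P.conjPatternGroup g₀ hU g) (quotConj _ g₀ hL X) =
      quotConj _ g₀ hL (P.coadj F g X) := by
  induction X using Submodule.Quotient.induction_on with
  | H Y =>
    simp only [coadj, quotConj_mk, Submodule.mapQ_apply, coe_conjPatternGroup_apply,
      conjLin_conjLin]
    congr 2
    group

theorem projL_quotConj (P : PatternPoset n) (m : Fin n) (g₀ : (Matrix (Fin n) (Fin n) F)ˣ)
    (hL : ∀ X, conjLin F g₀ X ∈ P.lowQuot F ↔ X ∈ P.lowQuot F)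
    (hLm : ∀ X, conjLin F g₀ X ∈ (P.restrictTo m).lowQuot F ↔ X ∈ (P.restrictTo m).lowQuot F)
    (X : P.LSpace F) :
    P.projL m F (quotConj _ g₀ hL X) = quotConj _ g₀ hLm (P.projL m F X) := by
  induction X using Submodule.Quotient.induction_on with
  | H Y => rfl

end PatternPoset

namespace PosetSystem

variable {n : ℕ} {F : Type*} [Field F]

theorem coadjQ_conjPatternGroup (S : PosetSystem n) (g₀ : (Matrix (Fin n) (Fin n) F)ˣ)
    (hU : ∀ X, conjLin F g₀ X ∈ S.P.patternAlg F ↔ X ∈ S.P.patternAlg F)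
    (hLm : ∀ X, conjLin F g₀ X ∈ (S.P.restrictTo S.m).lowQuot F ↔
      X ∈ (S.P.restrictTo S.m).lowQuot F)
    (g : S.P.patternGroup F) (X : (S.P.restrictTo S.m).LSpace F) :
    S.coadjQ F (S.P.conjPatternGroup g₀ hU g) (quotConj _ g₀ hLm X) =
      quotConj _ g₀ hLm (S.coadjQ F g X) := by
  induction X using Submodule.Quotient.induction_on with
  | H Y =>
    simp only [coadjQ, quotConj_mk, Submodule.mapQ_apply,
      PatternPoset.coe_conjPatternGroup_apply, conjLin_conjLin]
    congr 2
    group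

theorem systemK_eq_of_conj (S : PosetSystem n) {A' : Finset (Fin n)}
    {hA'm : ∀ x ∈ A', S.P.lt x S.m} {hA' : ∀ x ∈ A', ∀ y ∈ A', ¬ S.P.lt x y}
    (g₀ : (Matrix (Fin n) (Fin n) F)ˣ)
    (hU : ∀ X, conjLin F g₀ X ∈ S.P.patternAlg F ↔ X ∈ S.P.patternAlg F)
    (hL : ∀ X, conjLin F g₀ X ∈ S.P.lowQuot F ↔ X ∈ S.P.lowQuot F)
    (hLm : ∀ X, conjLin F g₀ X ∈ (S.P.restrictTo S.m).lowQuot F ↔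
      X ∈ (S.P.restrictTo S.m).lowQuot F)
    (hone : conjLin F g₀ (∑ c ∈ S.A, Matrix.single S.m c (1 : F)) =
      ∑ c ∈ A', Matrix.single S.m c (1 : F)) :
    S.systemK F = systemK ⟨S.P, S.m, S.m_max, A', hA'm, hA'⟩ F := by
  have hΨ : quotConj _ g₀ hLm (S.oneA F) =
      oneA ⟨S.P, S.m, S.m_max, A', hA'm, hA'⟩ F :=
    congrArg Submodule.Quotient.mk hone
  refine card_orbitSets_congr (S.P.conjPatternGroup g₀ hU) (quotConj _ g₀ hL).toEquiv
    (S.P.coadj_conjPatternGroup g₀ hU hL) (fun g => ?_) (fun X => ?_)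
  · change S.coadjQ F _ _ = _ ↔ S.coadjQ F g (S.oneA F) = S.oneA F
    rw [← hΨ, S.coadjQ_conjPatternGroup g₀ hU hLm, (quotConj _ g₀ hLm).injective.eq_iff]
  · change S.P.projL S.m F (quotConj _ g₀ hL X) = _ ↔ S.P.projL S.m F X = S.oneA F
    rw [← hΨ, S.P.projL_quotConj S.m g₀ hL hLm, (quotConj _ g₀ hLm).injective.eq_iff]

end PosetSystem

section Transvection

variable {n : ℕ} {F : Type*} [Field F]

theorem transvectionUnit_inv {a b : Fin n} (hab : a ≠ b) (α : F) :
    (transvectionUnit a b hab α)⁻¹ = transvectionUnit a b hab (-α) :=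
  Units.ext rfl

theorem conjLin_transvectionUnit {a b : Fin n} (hab : a ≠ b) (α : F)
    (X : Matrix (Fin n) (Fin n) F) :
    conjLin F (transvectionUnit a b hab α) X =
      (1 + Matrix.single a b α) * X * (1 + Matrix.single a b (-α)) :=
  rfl

theorem one_add_single_mul_mul_one_add_single_apply (a b : Fin n) (α β : F)
    (X : Matrix (Fin n) (Fin n) F) (i j : Fin n) :
    ((1 + Matrix.single a b α) * X * (1 + Matrix.single a b β)) i j =
      X i j + (if i = a then α * X b j else 0) + (if j = b then X i a * β else 0) +
        (if i = a ∧ j = b then α * X b a * β else 0) := by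
  have hexpand : (1 + Matrix.single a b α) * X * (1 + Matrix.single a b β) =
      X + Matrix.single a b α * X + X * Matrix.single a b β +
        Matrix.single a b α * X * Matrix.single a b β := by
    noncomm_ring
  rw [hexpand]
  by_cases hi : i = a <;> by_cases hj : j = b <;>
    simp [hi, hj, eq_comm (a := a), eq_comm (a := b)]

theorem conjLin_transvectionUnit_apply_eq_zero {a b : Fin n} (hab : a ≠ b) (α : F)
    {X : Matrix (Fin n) (Fin n) F} {i j : Fin n} (hij : X i j = 0)
    (hbj : i = a → X b j = 0) (hia : j = b → X i a = 0)
    (hba : i = a → j = b → X b a = 0) :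
    conjLin F (transvectionUnit a b hab α) X i j = 0 := by
  rw [conjLin_transvectionUnit, one_add_single_mul_mul_one_add_single_apply, hij]
  rcases eq_or_ne i a with rfl | hi <;> rcases eq_or_ne j b with rfl | hj
  · simp [hbj rfl, hia rfl, hba rfl rfl]
  · simp [hbj rfl, hj]
  · simp [hi, hia rfl]
  · simp [hi, hj]

theorem conjLin_transvectionUnit_mem_iff {p : Submodule F (Matrix (Fin n) (Fin n) F)}
    {a b : Fin n} (hab : a ≠ b)
    (hp : ∀ α X, X ∈ p → conjLin F (transvectionUnit a b hab α) X ∈ p) (α : F)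
    (X : Matrix (Fin n) (Fin n) F) :
    conjLin F (transvectionUnit a b hab α) X ∈ p ↔ X ∈ p :=
  conjLin_mem_iff_of_forall_mem (hp α) (transvectionUnit_inv hab α ▸ hp (-α)) X

end Transvection

namespace PatternPoset

variable {n : ℕ} {F : Type*} [Field F] (P : PatternPoset n) {a b : Fin n}

theorem conjLin_transvectionUnit_mem_patternAlg_iff (hab : a ≠ b)
    (hub : ∀ y, P.lt b y → P.lt a y) (hlb : ∀ y, P.lt y a → P.lt y b) (α : F)
    (X : Matrix (Fin n) (Fin n) F) :
    conjLin F (transvectionUnit a b hab α) X ∈ P.patternAlg F ↔ X ∈ P.patternAlg F := by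
  refine conjLin_transvectionUnit_mem_iff hab (fun α X hX i j hij => ?_) α X
  refine conjLin_transvectionUnit_apply_eq_zero hab α (hX i j hij) ?_ ?_ ?_
  · rintro rfl
    exact hX b j fun hbj => hij (hub j hbj)
  · rintro rfl
    exact hX i a fun hia => hij (hlb i hia)
  · exact fun _ _ => hX b a fun hba => P.lt_irrefl a (hub a hba)

theorem conjLin_transvectionUnit_mem_lowQuot_iff (hab : a ≠ b)
    (hub : ∀ y, P.lt b y → P.lt a y) (hlb : ∀ y, P.lt y a → P.lt y b) (α : F)
    (X : Matrix (Fin n) (Fin n) F) :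
    conjLin F (transvectionUnit a b hab α) X ∈ P.lowQuot F ↔ X ∈ P.lowQuot F := by
  refine conjLin_transvectionUnit_mem_iff hab (fun α X hX i j hji => ?_) α X
  refine conjLin_transvectionUnit_apply_eq_zero hab α (hX i j hji) ?_ ?_ ?_
  · rintro rfl
    exact hX b j (hlb j hji)
  · rintro rfl
    exact hX i a (hub i hji)
  · rintro rfl rfl
    exact (P.lt_irrefl i (hub i hji)).elim

theorem conjLin_transvectionUnit_mem_lowQuot_restrictTo_iff {m : Fin n} (hab : a ≠ b)
    (ham : P.lt a m) (α : F) (X : Matrix (Fin n) (Fin n) F) :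
    conjLin F (transvectionUnit a b hab α) X ∈ (P.restrictTo m).lowQuot F ↔
      X ∈ (P.restrictTo m).lowQuot F :=
  (P.restrictTo m).conjLin_transvectionUnit_mem_lowQuot_iff hab
    (fun _ hby => ⟨hby.1, hby.1 ▸ ham⟩)
    (fun _ hya => (P.ne_of_lt ham hya.1).elim) α X

end PatternPoset

theorem sum_single_one_apply {n : ℕ} {R : Type*} [Semiring R] (A : Finset (Fin n))
    (m i j : Fin n) :
    (∑ c ∈ A, Matrix.single m c (1 : R)) i j = if i = m ∧ j ∈ A then 1 else 0 := by
  rw [Matrix.sum_apply]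
  by_cases him : i = m <;> simp [Matrix.single_apply, him, eq_comm (a := m)]

theorem conjLin_transvectionUnit_sum_single {n : ℕ} {F : Type*} [Field F]
    {A : Finset (Fin n)} {m a b : Fin n} (hab : a ≠ b) (ha : a ∈ A) (hb : b ∈ A)
    (hbm : b ≠ m) :
    conjLin F (transvectionUnit a b hab 1) (∑ c ∈ A, Matrix.single m c (1 : F)) =
      ∑ c ∈ A.erase b, Matrix.single m c (1 : F) := by
  ext i j
  rw [conjLin_transvectionUnit, one_add_single_mul_mul_one_add_single_apply]
  simp only [sum_single_one_apply]
  by_cases him : i = m <;> by_cases hj : j = b <;> simp [him, hj, ha, hb, hbm]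

theorem systemK_erase_general (n : ℕ) (S : PosetSystem n) (a b : Fin n)
    (ha : a ∈ S.A) (hb : b ∈ S.A) (hab : a ≠ b)
    (hub : ∀ y, S.P.lt b y → S.P.lt a y)
    (hlb : ∀ y, S.P.lt y a → S.P.lt y b)
    (F : Type) [Field F] :
    S.systemK F = PosetSystem.systemK
      ⟨S.P, S.m, S.m_max, S.A.erase b,
        fun x hx => S.A_lb x (Finset.mem_of_mem_erase hx),
        fun x hx y hy =>
          S.A_anti x (Finset.mem_of_mem_erase hx) y (Finset.mem_of_mem_erase hy)⟩ F :=
  S.systemK_eq_of_conj (transvectionUnit a b hab 1)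
    (S.P.conjLin_transvectionUnit_mem_patternAlg_iff hab hub hlb 1)
    (S.P.conjLin_transvectionUnit_mem_lowQuot_iff hab hub hlb 1)
    (S.P.conjLin_transvectionUnit_mem_lowQuot_restrictTo_iff hab (S.A_lb a ha) 1)
    (conjLin_transvectionUnit_sum_single hab ha hb (S.P.ne_of_lt (S.A_lb b hb)))

/-- **Lemma 4.5**: if `a, b ∈ A` are distinct with `ub(a) ⊇ ub(b)` and `lb(a) ⊆ lb(b)`,
then `k(P, m, A; q) = k(P, m, A \\ {b}; q)`. -/
theorem systemK_erase (n : ℕ) (S : PosetSystem n) (a b : Fin n)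
    (ha : a ∈ S.A) (hb : b ∈ S.A) (hab : a ≠ b)
    (hub : ∀ y, S.P.lt b y → S.P.lt a y)
    (hlb : ∀ y, S.P.lt y a → S.P.lt y b)
    (F : Type) [Field F] [Fintype F] (hq : IsPrimePow (Fintype.card F)) :
    S.systemK F = PosetSystem.systemK
      ⟨S.P, S.m, S.m_max, S.A.erase b,
        fun x hx => S.A_lb x (Finset.mem_of_mem_erase hx),
        fun x hx y hy =>
          S.A_anti x (Finset.mem_of_mem_erase hx) y (Finset.mem_of_mem_erase hy)⟩ F :=
  systemK_erase_general n S a b ha hb hab hub hlb F
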